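/- Let N ≥ 1 be an integer, k > 0, and b₁,…,b_s nonzero real numbers. Suppose real-valued U^n, Y^{n,i} ∈ S_N satisfy one step of the s-stage composition scheme: Y^{n,0} = U^n, Y^{n,i} = Y^{n,i−1} + k b_i F((Y^{n,i} + Y^{n,i−1})/2) for 1 ≤ i ≤ s, and U^{n+1} = Y^{n,s}. Then the scheme is L²-conservative: ‖Y^{n,i}‖ = ‖U^n‖ for all 1 ≤ i ≤ s, and in particular ‖U^{n+1}‖ = ‖U^n‖. -/

import Mathlib

noncomputable section

namespace KdVSpec

/-- The L² inner product of two real-valued functions on `(-π, π)`. -/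
def L2inner (u v : ℝ → ℝ) : ℝ := ∫ x in (-Real.pi)..Real.pi, u x * v x

/-- The L² norm of a real-valued function on `(-π, π)`. -/
def L2norm (u : ℝ → ℝ) : ℝ := Real.sqrt (∫ x in (-Real.pi)..Real.pi, (u x)^2)

/-- The sup norm of a real-valued function on `[-π, π]`. -/
def LinfNorm (u : ℝ → ℝ) : ℝ := sSup ((fun x => |u x|) '' Set.Icc (-Real.pi) Real.pi)

/-- The `W^{1,∞}` norm `‖v‖_{1,∞} = |v|_∞ + |∂ₓ v|_∞`. -/
def norm1inf (u : ℝ → ℝ) : ℝ := LinfNorm u + LinfNorm (deriv u)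

/-- The `k`-th Fourier coefficient of a (2π-periodic) function on `(-π,π)`. -/
def fCoeff (u : ℝ → ℝ) (k : ℤ) : ℂ :=
  (1 / (2 * Real.pi)) *
    ∫ x in (-Real.pi)..Real.pi, Complex.exp (-(Complex.I * (k : ℂ) * (x : ℂ))) * (u x : ℂ)

/-- The periodic Sobolev norm of order `μ`. -/
def sobNorm (μ : ℝ) (u : ℝ → ℝ) : ℝ :=
  Real.sqrt (∑' k : ℤ, (1 + (k : ℝ)^2) ^ μ * ‖fCoeff u k‖^2)

/-- `v` is a (real-valued) trigonometric polynomial of degree at most `N`,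
i.e. a member of `S_N = span{e^{ikx} : |k| ≤ N}`. -/
def InSN (N : ℕ) (v : ℝ → ℝ) : Prop :=
  ∃ c : ℤ → ℂ, ∀ x : ℝ,
    (v x : ℂ) = ∑ k ∈ Finset.Icc (-(N : ℤ)) (N : ℤ), c k * Complex.exp (Complex.I * (k : ℂ) * (x : ℂ))

/-- The orthogonal L²-projection onto `S_N`, `P_N v = Σ_{|k|≤N} v̂(k) e^{ikx}`. -/
def PN (N : ℕ) (u : ℝ → ℝ) : ℝ → ℝ := fun x =>
  (∑ k ∈ Finset.Icc (-(N : ℤ)) (N : ℤ), fCoeff u k * Complex.exp (Complex.I * (k : ℂ) * (x : ℂ))).re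

/-- Spatial derivative `∂ₓ`. -/
def dx (u : ℝ → ℝ) : ℝ → ℝ := deriv u

/-- Third spatial derivative `∂ₓ³`. -/
def dx3 (u : ℝ → ℝ) : ℝ → ℝ := deriv (deriv (deriv u))

/-- The map `F(v) = -∂ₓ³ v - P_N(v ∂ₓ v)` on `S_N`. -/
def Fmap (N : ℕ) (v : ℝ → ℝ) : ℝ → ℝ := fun x =>
  -(dx3 v x) - PN N (fun y => v y * dx v y) x

/-- `u` solves the periodic KdV equation `u_t + u u_x + u_{xxx} = 0` on the time set `I`
(with 2π-periodicity in space). -/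
def IsKdVSolution (u : ℝ → ℝ → ℝ) (I : Set ℝ) : Prop :=
  (∀ t ∈ I, ∀ x : ℝ, u t (x + 2 * Real.pi) = u t x) ∧
  (∀ t ∈ I, ∀ x : ℝ,
    deriv (fun s => u s x) t + u t x * dx (u t) x + dx3 (u t) x = 0)

/-- `w` is the semidiscrete Fourier–Galerkin approximation (with initial value `P_N u₀`)
on the time set `I`: `w(t) ∈ S_N`, `w` is differentiable in time, `w(0) = P_N u₀` and
`(∂_t w + w ∂ₓ w + ∂ₓ³ w, χ) = 0` for every `χ ∈ S_N`. -/
def SemidiscreteOn (N : ℕ) (u0 : ℝ → ℝ) (w : ℝ → ℝ → ℝ) (I : Set ℝ) : Prop :=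
  (∀ t ∈ I, InSN N (w t)) ∧
  (∀ x : ℝ, ∀ t ∈ I, DifferentiableAt ℝ (fun s => w s x) t) ∧
  (∀ x : ℝ, w 0 x = PN N u0 x) ∧
  (∀ t ∈ I, ∀ χ : ℝ → ℝ, InSN N χ →
    L2inner (fun x => deriv (fun s => w s x) t + w t x * dx (w t) x + dx3 (w t) x) χ = 0)

/-!
Testing the stage `Yⁱ = Yⁱ⁻¹ + k bᵢ F(m)`, `m = (Yⁱ + Yⁱ⁻¹)/2`, against `Yⁱ + Yⁱ⁻¹ = 2m` gives
`‖Yⁱ‖² - ‖Yⁱ⁻¹‖² = 2 k bᵢ (F(m), m)`, so it suffices that `(F(m), m) = 0` for every real `m ∈ S_N`.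
Since `P_N` is symmetric and fixes `m`, `(P_N(m ∂ₓm), m) = ∫ m² ∂ₓm = [m³/3] = 0`, and
`(∂ₓ³m, m) = [m ∂ₓ²m - (∂ₓm)²/2] = 0`; both boundary terms vanish by `2π`-periodicity.
-/

end KdVSpec

open Complex Finset Function intervalIntegral
open scoped Real

theorem Function.Periodic.deriv {𝕜 F : Type*} [NontriviallyNormedField 𝕜] [NormedAddCommGroup F]
    [NormedSpace 𝕜 F] {f : 𝕜 → F} {T : 𝕜} (hf : Periodic f T) :
    Periodic (deriv f) T := fun x => by
  rw [← deriv_comp_add_const, show (fun y => f (y + T)) = f from funext hf]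

theorem integral_deriv_eq_zero_of_periodic {E : Type*} [NormedAddCommGroup E] [NormedSpace ℝ E]
    [CompleteSpace E] {g : ℝ → E} {T : ℝ} (hg : ContDiff ℝ 1 g) (hper : Periodic g T) (a : ℝ) :
    ∫ x in a..a + T, deriv g x = 0 := by
  rw [integral_deriv_eq_sub (fun x _ => (hg.differentiable one_ne_zero).differentiableAt)
    ((hg.continuous_deriv le_rfl).intervalIntegrable _ _), hper, sub_self]

theorem integral_mul_deriv_mul_self_eq_zero_of_periodic {f : ℝ → ℝ} {T : ℝ}
    (hf : ContDiff ℝ 1 f) (hper : Periodic f T) (a : ℝ) :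
    ∫ x in a..a + T, f x * deriv f x * f x = 0 := by
  have hderiv : deriv (fun x => f x ^ 3 / 3) = fun x => f x * deriv f x * f x := by
    funext x
    rw [((((hf.differentiable one_ne_zero) x).hasDerivAt.fun_pow 3).div_const 3).deriv]
    ring
  rw [← hderiv]
  exact integral_deriv_eq_zero_of_periodic ((hf.pow 3).div_const 3)
    (fun x => by simp only [hper x]) a

theorem integral_deriv_deriv_deriv_mul_self_eq_zero_of_periodic {f : ℝ → ℝ} {T : ℝ}
    (hf : ContDiff ℝ 3 f) (hper : Periodic f T) (a : ℝ) :
    ∫ x in a..a + T, deriv (deriv (deriv f)) x * f x = 0 := by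
  have h1 : ContDiff ℝ 2 (deriv f) := hf.deriv'
  have h2 : ContDiff ℝ 1 (deriv (deriv f)) := h1.deriv'
  have hderiv : deriv (fun x => deriv (deriv f) x * f x - deriv f x ^ 2 / 2)
      = fun x => deriv (deriv (deriv f)) x * f x := by
    funext x
    have hf' := (hf.differentiable (by norm_num) x).hasDerivAt
    have hf'' := (h1.differentiable (by norm_num) x).hasDerivAt
    have hf''' := (h2.differentiable one_ne_zero x).hasDerivAt
    rw [((hf'''.fun_mul hf').fun_sub ((hf''.fun_pow 2).div_const 2)).deriv]
    ring
  rw [← hderiv]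
  refine integral_deriv_eq_zero_of_periodic ?_ (fun x => ?_) a
  · exact (h2.mul (hf.of_le (by norm_num))).sub (((h1.of_le (by norm_num)).pow 2).div_const 2)
  · simp only [hper x, hper.deriv x, hper.deriv.deriv x]

namespace KdVSpec

theorem periodic_exp_int_mul (n : ℤ) : Periodic (fun x : ℝ => exp (I * n * x)) (2 * π) := by
  intro x
  simp only
  rw [show I * n * ↑(x + 2 * π) = I * n * x + n * (2 * π * I) by push_cast; ring,
    exp_add, exp_int_mul_two_pi_mul_I, mul_one]

theorem integral_exp_int_mul (n : ℤ) :
    ∫ x in (-π)..π, exp (I * n * x) = if n = 0 then (2 * π : ℂ) else 0 := by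
  split_ifs with hn
  · simp [hn]
    ring
  · have hc : I * n ≠ 0 := mul_ne_zero I_ne_zero (Int.cast_ne_zero.mpr hn)
    have hper := periodic_exp_int_mul n (-π)
    rw [show -π + 2 * π = π by ring] at hper
    beta_reduce at hper
    rw [integral_exp_mul_complex hc, hper, sub_self, zero_div]

def trigPoly (N : ℕ) (c : ℤ → ℂ) (x : ℝ) : ℂ :=
  ∑ k ∈ Icc (-(N : ℤ)) N, c k * exp (I * k * x)

theorem contDiff_trigPoly (N : ℕ) (c : ℤ → ℂ) {n : WithTop ℕ∞} : ContDiff ℝ n (trigPoly N c) :=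
  ContDiff.sum fun _ _ => contDiff_const.mul (contDiff_const.mul ofRealCLM.contDiff).cexp

theorem continuous_trigPoly (N : ℕ) (c : ℤ → ℂ) : Continuous (trigPoly N c) :=
  (contDiff_trigPoly N c (n := 0)).continuous

theorem periodic_trigPoly (N : ℕ) (c : ℤ → ℂ) : Periodic (trigPoly N c) (2 * π) := fun x =>
  sum_congr rfl fun k _ => congrArg (c k * ·) (periodic_exp_int_mul k x)

theorem integral_exp_int_mul_mul_eq_fCoeff (w : ℝ → ℝ) (k : ℤ) :
    ∫ x in (-π)..π, exp (I * k * x) * w x = 2 * π * fCoeff w (-k) := by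
  have hπ : (π : ℂ) ≠ 0 := ofReal_ne_zero.mpr Real.pi_ne_zero
  simp only [fCoeff, Int.cast_neg, mul_neg, neg_mul, neg_neg]
  field_simp

theorem fCoeff_eq_of_eq_trigPoly {N : ℕ} {v : ℝ → ℝ} {c : ℤ → ℂ}
    (hv : ∀ x, (v x : ℂ) = trigPoly N c x) {j : ℤ} (hj : j ∈ Icc (-(N : ℤ)) N) :
    fCoeff v j = c j := by
  have hπ : (π : ℂ) ≠ 0 := ofReal_ne_zero.mpr Real.pi_ne_zero
  have hpt : ∀ x : ℝ, exp (-(I * j * x)) * v x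
      = ∑ k ∈ Icc (-(N : ℤ)) N, c k * exp (I * (k - j : ℤ) * x) := fun x => by
    rw [hv, trigPoly, mul_sum]
    refine sum_congr rfl fun k _ => ?_
    rw [mul_left_comm, ← exp_add]
    push_cast
    ring_nf
  simp only [fCoeff, hpt]
  rw [integral_finsetSum fun k _ => (by fun_prop : Continuous _).intervalIntegrable _ _]
  simp only [integral_const_mul, integral_exp_int_mul, sub_eq_zero, mul_ite, mul_zero,
    sum_ite_eq', if_pos hj]
  field_simp

theorem integral_trigPoly_mul_eq_sum_fCoeff (N : ℕ) (c : ℤ → ℂ) {g : ℝ → ℝ} (hg : Continuous g) :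
    ∫ x in (-π)..π, trigPoly N c x * g x
      = 2 * π * ∑ k ∈ Icc (-(N : ℤ)) N, c k * fCoeff g (-k) := by
  simp only [trigPoly, sum_mul]
  rw [integral_finsetSum fun k _ => (by fun_prop : Continuous _).intervalIntegrable _ _, mul_sum]
  refine sum_congr rfl fun k _ => ?_
  simp only [mul_assoc (c k)]
  rw [integral_const_mul, integral_exp_int_mul_mul_eq_fCoeff]
  ring

theorem sum_Icc_neg_comp {M : Type*} [AddCommMonoid M] (N : ℤ) (f : ℤ → M) :
    ∑ k ∈ Icc (-N) N, f (-k) = ∑ k ∈ Icc (-N) N, f k :=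
  sum_equiv (Equiv.neg ℤ) (fun k => by simp only [Equiv.neg_apply, mem_Icc]; omega)
    (fun _ _ => rfl)

theorem InSN.eq_re {N : ℕ} {v : ℝ → ℝ} (hv : InSN N v) :
    ∃ c, (∀ x, (v x : ℂ) = trigPoly N c x) ∧ v = fun x => (trigPoly N c x).re := by
  obtain ⟨c, hc⟩ := hv
  have hc' : ∀ x, (v x : ℂ) = trigPoly N c x := hc
  exact ⟨c, hc', funext fun x => by rw [← hc', ofReal_re]⟩

theorem InSN.contDiff {N : ℕ} {v : ℝ → ℝ} (hv : InSN N v) {n : WithTop ℕ∞} : ContDiff ℝ n v := by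
  obtain ⟨c, -, rfl⟩ := hv.eq_re
  exact reCLM.contDiff.comp (contDiff_trigPoly N c)

theorem InSN.continuous {N : ℕ} {v : ℝ → ℝ} (hv : InSN N v) : Continuous v :=
  (hv.contDiff (n := 0)).continuous

theorem InSN.periodic {N : ℕ} {v : ℝ → ℝ} (hv : InSN N v) : Periodic v (2 * π) := by
  obtain ⟨c, -, rfl⟩ := hv.eq_re
  exact fun x => congrArg re (periodic_trigPoly N c x)

theorem InSN.midpoint {N : ℕ} {u w : ℝ → ℝ} (hu : InSN N u) (hw : InSN N w) :
    InSN N (fun x => (u x + w x) / 2) := by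
  obtain ⟨cu, hcu⟩ := hu
  obtain ⟨cw, hcw⟩ := hw
  refine ⟨fun k => (cu k + cw k) / 2, fun x => ?_⟩
  push_cast
  rw [hcu, hcw, ← sum_add_distrib, sum_div]
  exact sum_congr rfl fun k _ => by ring

theorem continuous_PN (N : ℕ) (w : ℝ → ℝ) : Continuous (PN N w) :=
  continuous_re.comp (continuous_trigPoly N (fCoeff w))

-- both sides equal `2π ∑_{|k| ≤ N} ŵ(k) c(-k)`, where `c` are the coefficients of `v`
theorem L2inner_PN_left {N : ℕ} {w v : ℝ → ℝ} (hw : Continuous w) (hv : InSN N v) :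
    L2inner (PN N w) v = L2inner w v := by
  obtain ⟨c, hc, -⟩ := hv.eq_re
  have hvc : Continuous v := hv.continuous
  have hsum : ∫ x in (-π)..π, trigPoly N (fCoeff w) x * v x
      = ∫ x in (-π)..π, trigPoly N c x * w x := by
    rw [integral_trigPoly_mul_eq_sum_fCoeff _ _ hvc, integral_trigPoly_mul_eq_sum_fCoeff _ _ hw,
      ← sum_Icc_neg_comp N (fun k => c k * fCoeff w (-k))]
    simp only [neg_neg]
    refine congrArg _ (sum_congr rfl fun k hk => ?_)
    rw [fCoeff_eq_of_eq_trigPoly hc (by simp only [mem_Icc] at hk ⊢; omega), mul_comm]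
  have hre : L2inner (PN N w) v = (∫ x in (-π)..π, trigPoly N (fCoeff w) x * v x).re := by
    have hint : IntervalIntegrable (fun x => trigPoly N (fCoeff w) x * v x)
        MeasureTheory.volume (-π) π :=
      ((continuous_trigPoly N _).mul (continuous_ofReal.comp hvc)).intervalIntegrable _ _
    rw [← reCLM_apply, ← reCLM.intervalIntegral_comp_comm hint]
    simp only [L2inner, PN, reCLM_apply, re_mul_ofReal]
    rfl
  have hre' : (L2inner w v : ℂ) = ∫ x in (-π)..π, trigPoly N c x * w x := by
    rw [L2inner, ← intervalIntegral.integral_ofReal]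
    push_cast
    simp only [hc, mul_comm]
  rw [hre, hsum, ← hre', ofReal_re]

theorem InSN.L2inner_dx3_self {N : ℕ} {v : ℝ → ℝ} (hv : InSN N v) : L2inner (dx3 v) v = 0 := by
  have h := integral_deriv_deriv_deriv_mul_self_eq_zero_of_periodic
    hv.contDiff hv.periodic (-π)
  rwa [show -π + 2 * π = π by ring] at h

theorem InSN.L2inner_mul_dx_self {N : ℕ} {v : ℝ → ℝ} (hv : InSN N v) :
    L2inner (fun x => v x * dx v x) v = 0 := by
  have h := integral_mul_deriv_mul_self_eq_zero_of_periodic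
    hv.contDiff hv.periodic (-π)
  rwa [show -π + 2 * π = π by ring] at h

theorem InSN.continuous_dx3 {N : ℕ} {v : ℝ → ℝ} (hv : InSN N v) : Continuous (dx3 v) :=
  (hv.contDiff.iterate_deriv 3).continuous

theorem InSN.continuous_Fmap {N : ℕ} {v : ℝ → ℝ} (hv : InSN N v) : Continuous (Fmap N v) :=
  hv.continuous_dx3.neg.sub (continuous_PN _ _)

theorem InSN.L2inner_Fmap_self {N : ℕ} {v : ℝ → ℝ} (hv : InSN N v) :
    L2inner (Fmap N v) v = 0 := by
  have hvc : Continuous v := hv.continuous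
  have hvdv : Continuous (fun x => v x * dx v x) :=
    hvc.mul ((hv.contDiff (n := 1)).continuous_deriv le_rfl)
  have hdx3 := hv.L2inner_dx3_self
  have hPN := L2inner_PN_left hvdv hv
  have hmul := hv.L2inner_mul_dx_self
  simp only [L2inner, Fmap, sub_mul, neg_mul] at hdx3 hPN hmul ⊢
  have hint₁ : Continuous fun x => -(dx3 v x * v x) := (hv.continuous_dx3.mul hvc).neg
  have hint₂ : Continuous fun x => PN N (fun y => v y * dx v y) x * v x :=
    (continuous_PN _ _).mul hvc
  rw [integral_sub (hint₁.intervalIntegrable _ _) (hint₂.intervalIntegrable _ _), integral_neg,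
    hdx3, hPN, hmul, neg_zero, sub_zero]

theorem L2norm_eq_of_midpoint_step {N : ℕ} {u w : ℝ → ℝ} (hu : InSN N u) (hw : InSN N w)
    {τ : ℝ} (hstep : ∀ x, u x = w x + τ * Fmap N (fun y => (u y + w y) / 2) x) :
    L2norm u = L2norm w := by
  set m := fun y => (u y + w y) / 2
  have hm : InSN N m := hu.midpoint hw
  have hsq : ∀ x, u x ^ 2 = w x ^ 2 + 2 * τ * (Fmap N m x * m x) := fun x => by
    linear_combination (u x + w x) * hstep x
  have hint₁ : Continuous fun x => w x ^ 2 := hw.continuous.pow 2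
  have hint₂ : Continuous fun x => 2 * τ * (Fmap N m x * m x) :=
    (hm.continuous_Fmap.mul hm.continuous).const_mul _
  rw [L2norm, L2norm, funext hsq, integral_add (hint₁.intervalIntegrable _ _)
    (hint₂.intervalIntegrable _ _), integral_const_mul, ← L2inner, hm.L2inner_Fmap_self,
    mul_zero, add_zero]

theorem composition_L2_conservation_general
    (N : ℕ) (k : ℝ) (s : ℕ)
    (b : ℕ → ℝ)
    (Un Un1 : ℝ → ℝ) (Y : ℕ → ℝ → ℝ)
    (hYSN : ∀ i ≤ s, InSN N (Y i))
    (hY0 : ∀ x : ℝ, Y 0 x = Un x)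
    (hrec : ∀ i, 1 ≤ i → i ≤ s → ∀ x : ℝ,
      Y i x = Y (i-1) x + k * b i * Fmap N (fun y => (Y i y + Y (i-1) y) / 2) x)
    (hUn1 : ∀ x : ℝ, Un1 x = Y s x) :
    (∀ i, 1 ≤ i → i ≤ s → L2norm (Y i) = L2norm Un) ∧ L2norm Un1 = L2norm Un := by
  have hstage : ∀ i ≤ s, L2norm (Y i) = L2norm Un := by
    intro i hi
    induction i with
    | zero => rw [funext hY0]
    | succ i ih =>
      rw [← ih (by omega)]
      exact L2norm_eq_of_midpoint_step (hYSN _ hi) (hYSN i (by omega)) (hrec (i + 1) (by omega) hi)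
  exact ⟨fun i _ hi => hstage i hi, by rw [funext hUn1, hstage s le_rfl]⟩

/-- L²-conservation of one step of the `s`-stage IMR-composition scheme:
`‖Y^{n,i}‖ = ‖Uⁿ‖` for `1 ≤ i ≤ s`, and in particular `‖U^{n+1}‖ = ‖Uⁿ‖`. -/
theorem composition_L2_conservation
    (N : ℕ) (hN : 1 ≤ N) (k : ℝ) (hk : 0 < k) (s : ℕ) (hs : 1 ≤ s)
    (b : ℕ → ℝ) (hb : ∀ i, 1 ≤ i → i ≤ s → b i ≠ 0)
    (Un Un1 : ℝ → ℝ) (Y : ℕ → ℝ → ℝ)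
    (hUn : InSN N Un) (hYSN : ∀ i ≤ s, InSN N (Y i))
    (hY0 : ∀ x : ℝ, Y 0 x = Un x)
    (hrec : ∀ i, 1 ≤ i → i ≤ s → ∀ x : ℝ,
      Y i x = Y (i-1) x + k * b i * Fmap N (fun y => (Y i y + Y (i-1) y) / 2) x)
    (hUn1 : ∀ x : ℝ, Un1 x = Y s x) :
    (∀ i, 1 ≤ i → i ≤ s → L2norm (Y i) = L2norm Un) ∧ L2norm Un1 = L2norm Un :=
  composition_L2_conservation_general N k s b Un Un1 Y hYSN hY0 hrec hUn1

end KdVSpec
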